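/- arXiv:2306.10260 — 2 statements merged into one kernel-verified Lean document; each statement's English description precedes it below -/
import Mathlib

section
/- (Randomized-response likelihood ratio amplification.) Let r ∈ (0,1), ε ≥ 0, and let p, p′ ∈ [0,1] satisfy p′ ≤ e^{ε}·p and (1 − p) ≤ e^{ε}·(1 − p′). Then ((1−r)/2 + r·p′) / ((1−r)/2 + r·p) ≤ (e^{ε}(1+r) + 1 − r) / (e^{ε}(1−r) + 1 + r). -/
open Real

/-!
After cross-multiplying, the gap between the two sides is a nonnegative combination, with
weights `r (1 + r)` and `r (1 - r)`, of the slacks in the two likelihood-ratio constraints.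
-/

theorem randomizedResponse_pos {r p : ℝ} (hr0 : 0 ≤ r) (hr1 : r < 1) (hp : 0 ≤ p) :
    0 < (1 - r) / 2 + r * p := by
  nlinarith [mul_nonneg hr0 hp]

theorem randomizedResponse_cross_gap (E r p p' : ℝ) :
    (E * (1 + r) + 1 - r) * ((1 - r) / 2 + r * p) -
        ((1 - r) / 2 + r * p') * (E * (1 - r) + 1 + r) =
      r * (1 + r) * (E * p - p') + r * (1 - r) * (E * (1 - p') - (1 - p)) := by
  ring

theorem randomizedResponse_ratio_le {E r p p' : ℝ} (hE : 0 < E) (hr0 : 0 ≤ r) (hr1 : r < 1)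
    (hp : 0 ≤ p) (h1 : p' ≤ E * p) (h2 : 1 - p ≤ E * (1 - p')) :
    ((1 - r) / 2 + r * p') / ((1 - r) / 2 + r * p) ≤
      (E * (1 + r) + 1 - r) / (E * (1 - r) + 1 + r) := by
  have hden : 0 < E * (1 - r) + 1 + r := by nlinarith
  rw [div_le_div_iff₀ (randomizedResponse_pos hr0 hr1 hp) hden, ← sub_nonneg,
    randomizedResponse_cross_gap]
  have hw₁ : 0 ≤ r * (1 + r) := by nlinarith
  have hw₂ : 0 ≤ r * (1 - r) := mul_nonneg hr0 (by linarith)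
  have := mul_nonneg hw₁ (sub_nonneg.2 h1)
  have := mul_nonneg hw₂ (sub_nonneg.2 h2)
  linarith

theorem randomized_response_amplification_general (r ε p p' : ℝ)
    (hr : r ∈ Set.Ioo (0 : ℝ) 1)
    (hp : p ∈ Set.Icc (0 : ℝ) 1)
    (h1 : p' ≤ Real.exp ε * p) (h2 : 1 - p ≤ Real.exp ε * (1 - p')) :
    ((1 - r) / 2 + r * p') / ((1 - r) / 2 + r * p) ≤
      (Real.exp ε * (1 + r) + 1 - r) / (Real.exp ε * (1 - r) + 1 + r) :=
  randomizedResponse_ratio_le (exp_pos ε) hr.1.le hr.2 hp.1 h1 h2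

/-- Randomized-response likelihood ratio amplification: if the binary query output
probabilities `p, p′` satisfy the `ε`-DP likelihood conditions, then after passing
through the randomized response channel with truthful response rate `r`, the likelihood
ratio is bounded by `(e^ε(1+r) + 1 − r)/(e^ε(1−r) + 1 + r)`. -/
theorem randomized_response_amplification (r ε p p' : ℝ)
    (hr : r ∈ Set.Ioo (0 : ℝ) 1) (hε : 0 ≤ ε)
    (hp : p ∈ Set.Icc (0 : ℝ) 1) (hp' : p' ∈ Set.Icc (0 : ℝ) 1)
    (h1 : p' ≤ Real.exp ε * p) (h2 : 1 - p ≤ Real.exp ε * (1 - p')) :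
    ((1 - r) / 2 + r * p') / ((1 - r) / 2 + r * p) ≤
      (Real.exp ε * (1 + r) + 1 - r) / (Real.exp ε * (1 - r) + 1 + r) :=
  randomized_response_amplification_general r ε p p' hr hp h1 h2
end

section
/- (GDP-type constraint forces a variance lower bound.) Let Φ denote the cumulative distribution function of the standard normal law. Let (μ_n) and (ν_n) be sequences of Borel probability measures on ℝ, let σ_n > 0 and ε_n ≥ 0, and suppose: (i) the pushforward of μ_n under x ↦ x/σ_n converges weakly to N(0,1); (ii) the pushforward of ν_n under x ↦ (x − ε_n)/σ_n converges weakly to N(0,1); and (iii) for every δ > 0 there exists n_0 such that for all n ≥ n_0 and every Borel set E ⊆ ℝ, μ_n(E) − ν_n(E) ≤ 2Φ(1/2) − 1 + δ. Then lim sup_{n→∞} ε_n/σ_n ≤ 1; equivalently, for every k > 1, ε_n/σ_n ≤ k for all sufficiently large n. -/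
/-! Test the constraint on the half-lines `Eₙ = (-∞, k σₙ / 2]`. Since the Gaussian CDF
is continuous, weak convergence gives `μₙ(Eₙ) → Φ(k/2)`; and if `εₙ > k σₙ` then
`Eₙ ⊆ (-∞, εₙ - k σₙ / 2]`, whose `νₙ`-mass tends to `Φ(-k/2) = 1 - Φ(k/2)`. So along
such `n` the gap `μₙ(Eₙ) - νₙ(Eₙ)` is eventually close to `2Φ(k/2) - 1`, which exceeds
the allowed `2Φ(1/2) - 1 + δ` for `δ = Φ(k/2) - Φ(1/2)`, positive because `Φ` is strictly
increasing. -/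

open MeasureTheory ProbabilityTheory Filter Real

noncomputable def stdNormalCDF (x : ℝ) : ℝ :=
  ((ProbabilityTheory.gaussianReal 0 1) (Set.Iic x)).toReal

open Set Topology

instance {m : ℝ} {v : NNReal} [NeZero v] : NullSingletonClass (gaussianReal m v) :=
  nullSingletonClass_gaussianReal (NeZero.ne v)

lemma stdNormalCDF_eq_cdf : stdNormalCDF = cdf (gaussianReal 0 1) :=
  funext fun x => (cdf_eq_real _ x).symm

lemma stdNormalCDF_strictMono : StrictMono stdNormalCDF := by
  intro a b hab
  have hpos : gaussianReal 0 1 (Ioc a b) ≠ 0 := fun h => by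
    simpa [hab.not_ge] using gaussianReal_absolutelyContinuous' 0 one_ne_zero h
  rw [← measure_cdf (gaussianReal 0 1), StieltjesFunction.measure_Ioc, ← stdNormalCDF_eq_cdf,
    Ne, ENNReal.ofReal_eq_zero, not_le, sub_pos] at hpos
  exact hpos

lemma stdNormalCDF_neg (a : ℝ) : stdNormalCDF (-a) = 1 - stdNormalCDF a := by
  have hreflect : gaussianReal 0 1 (Iic (-a)) = gaussianReal 0 1 (Ici a) := by
    conv_lhs => rw [← neg_zero, ← gaussianReal_map_neg]
    rw [Measure.map_apply measurable_neg measurableSet_Iic]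
    congr 1
    ext x
    simp
  rw [stdNormalCDF, hreflect, ← compl_Iio, prob_compl_eq_one_sub measurableSet_Iio,
    measure_congr Iio_ae_eq_Iic, ENNReal.toReal_sub_of_le prob_le_one ENNReal.one_ne_top,
    ENNReal.toReal_one, stdNormalCDF]

lemma tendsto_measureReal_of_forall_integral_tendsto {Ω ι : Type*} {L : Filter ι}
    [MeasurableSpace Ω] [TopologicalSpace Ω] [OpensMeasurableSpace Ω] [HasOuterApproxClosed Ω]
    {μs : ι → Measure Ω} [∀ i, IsProbabilityMeasure (μs i)] {μ : Measure Ω}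
    [IsProbabilityMeasure μ]
    (h : ∀ f : BoundedContinuousFunction Ω ℝ,
      Tendsto (fun i => ∫ x, f x ∂μs i) L (𝓝 (∫ x, f x ∂μ)))
    {E : Set Ω} (hE : μ (frontier E) = 0) :
    Tendsto (fun i => (μs i).real E) L (𝓝 (μ.real E)) := by
  have hlim := ProbabilityMeasure.tendsto_iff_forall_integral_tendsto
    (μs := fun i => ⟨μs i, inferInstance⟩) (μ := ⟨μ, inferInstance⟩) |>.2 h
  exact (ENNReal.tendsto_toReal (measure_ne_top _ _)).comp
    (ProbabilityMeasure.tendsto_measure_of_null_frontier_of_tendsto' hlim hE)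

lemma tendsto_measureReal_Iic_of_tendsto_stdGaussian {ι : Type*} {L : Filter ι}
    {μs : ι → Measure ℝ} [∀ i, IsProbabilityMeasure (μs i)]
    (h : ∀ f : BoundedContinuousFunction ℝ ℝ,
      Tendsto (fun i => ∫ x, f x ∂μs i) L (𝓝 (∫ x, f x ∂gaussianReal 0 1))) (a : ℝ) :
    Tendsto (fun i => (μs i).real (Iic a)) L (𝓝 (stdNormalCDF a)) :=
  tendsto_measureReal_of_forall_integral_tendsto h <| by
    rw [frontier_Iic]
    exact measure_singleton a

lemma map_sub_div_apply_Iic (μ : Measure ℝ) {σ : ℝ} (hσ : 0 < σ) (ε c : ℝ) :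
    μ.map (fun x => (x - ε) / σ) (Iic c) = μ (Iic (c * σ + ε)) := by
  rw [Measure.map_apply (by fun_prop) measurableSet_Iic]
  congr 1
  ext x
  simp [div_le_iff₀ hσ]

lemma map_div_apply_Iic (μ : Measure ℝ) {σ : ℝ} (hσ : 0 < σ) (c : ℝ) :
    μ.map (fun x => x / σ) (Iic c) = μ (Iic (c * σ)) := by
  simpa using map_sub_div_apply_Iic μ hσ 0 c

theorem gdp_constraint_variance_lower_bound_general
    (μ ν : ℕ → Measure ℝ) (hμ : ∀ n, IsProbabilityMeasure (μ n))
    (hν : ∀ n, IsProbabilityMeasure (ν n))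
    (σ ε : ℕ → ℝ) (hσ : ∀ n, 0 < σ n)
    (h1 : ∀ f : BoundedContinuousFunction ℝ ℝ,
      Tendsto (fun n => ∫ x, f x ∂((μ n).map (fun x => x / σ n))) atTop
        (nhds (∫ x, f x ∂(ProbabilityTheory.gaussianReal 0 1))))
    (h2 : ∀ f : BoundedContinuousFunction ℝ ℝ,
      Tendsto (fun n => ∫ x, f x ∂((ν n).map (fun x => (x - ε n) / σ n))) atTop
        (nhds (∫ x, f x ∂(ProbabilityTheory.gaussianReal 0 1))))
    (h3 : ∀ δ > (0 : ℝ), ∃ n₀ : ℕ, ∀ n ≥ n₀, ∀ E : Set ℝ, MeasurableSet E →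
      ((μ n) E).toReal - ((ν n) E).toReal ≤ 2 * stdNormalCDF (1 / 2) - 1 + δ) :
    ∀ k > (1 : ℝ), ∀ᶠ n in atTop, ε n / σ n ≤ k := by
  intro k hk
  have (n : ℕ) : IsProbabilityMeasure ((μ n).map (fun x => x / σ n)) :=
    Measure.isProbabilityMeasure_map (by fun_prop)
  have (n : ℕ) : IsProbabilityMeasure ((ν n).map (fun x => (x - ε n) / σ n)) :=
    Measure.isProbabilityMeasure_map (by fun_prop)
  set a := stdNormalCDF (k / 2)
  set b := stdNormalCDF (1 / 2)
  have hμlim : Tendsto (fun n => (μ n).real (Iic (k / 2 * σ n))) atTop (𝓝 a) := by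
    refine (tendsto_measureReal_Iic_of_tendsto_stdGaussian h1 (k / 2)).congr fun n => ?_
    rw [measureReal_def, measureReal_def, map_div_apply_Iic (μ n) (hσ n)]
  have hνlim :
      Tendsto (fun n => (ν n).real (Iic (-(k / 2) * σ n + ε n))) atTop (𝓝 (1 - a)) := by
    rw [← stdNormalCDF_neg]
    refine (tendsto_measureReal_Iic_of_tendsto_stdGaussian h2 (-(k / 2))).congr fun n => ?_
    rw [measureReal_def, measureReal_def, map_sub_div_apply_Iic (ν n) (hσ n)]
  have hba : b < a := stdNormalCDF_strictMono (by linarith)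
  obtain ⟨n₀, hn₀⟩ := h3 (a - b) (sub_pos.2 hba)
  have hgap := (hμlim.sub hνlim).eventually
    (lt_mem_nhds (show a + b - 1 < a - (1 - a) by linarith))
  filter_upwards [hgap, eventually_ge_atTop n₀] with n hgap hn
  by_contra! hlarge
  have hν_le :
      (ν n).real (Iic (k / 2 * σ n)) ≤ (ν n).real (Iic (-(k / 2) * σ n + ε n)) := by
    refine measureReal_mono (Iic_subset_Iic.2 ?_)
    linarith [(lt_div_iff₀ (hσ n)).1 hlarge]
  have hconstraint := hn₀ n hn _ (measurableSet_Iic (a := k / 2 * σ n))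
  rw [← measureReal_def, ← measureReal_def] at hconstraint
  linarith

/-- A GDP-type constraint forces a variance lower bound: if `μ_n` rescaled by `1/σ_n`
and `ν_n` recentered by `ε_n` and rescaled by `1/σ_n` both converge weakly to `N(0,1)`,
and eventually `μ_n(E) − ν_n(E) ≤ 2Φ(1/2) − 1 + δ` for every Borel `E` and every
`δ > 0`, then for every `k > 1`, `ε_n/σ_n ≤ k` for all sufficiently large `n`
(i.e. `lim sup ε_n/σ_n ≤ 1`). -/
theorem gdp_constraint_variance_lower_bound
    (μ ν : ℕ → Measure ℝ) (hμ : ∀ n, IsProbabilityMeasure (μ n))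
    (hν : ∀ n, IsProbabilityMeasure (ν n))
    (σ ε : ℕ → ℝ) (hσ : ∀ n, 0 < σ n) (hε : ∀ n, 0 ≤ ε n)
    (h1 : ∀ f : BoundedContinuousFunction ℝ ℝ,
      Tendsto (fun n => ∫ x, f x ∂((μ n).map (fun x => x / σ n))) atTop
        (nhds (∫ x, f x ∂(ProbabilityTheory.gaussianReal 0 1))))
    (h2 : ∀ f : BoundedContinuousFunction ℝ ℝ,
      Tendsto (fun n => ∫ x, f x ∂((ν n).map (fun x => (x - ε n) / σ n))) atTop
        (nhds (∫ x, f x ∂(ProbabilityTheory.gaussianReal 0 1))))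
    (h3 : ∀ δ > (0 : ℝ), ∃ n₀ : ℕ, ∀ n ≥ n₀, ∀ E : Set ℝ, MeasurableSet E →
      ((μ n) E).toReal - ((ν n) E).toReal ≤ 2 * stdNormalCDF (1 / 2) - 1 + δ) :
    ∀ k > (1 : ℝ), ∀ᶠ n in atTop, ε n / σ n ≤ k :=
  gdp_constraint_variance_lower_bound_general μ ν hμ hν σ ε hσ h1 h2 h3
end
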